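/- arXiv:2309.04830 — 5 statements merged into one kernel-verified Lean document; each statement's English description precedes it below -/
import Mathlib

section
/- In a unimodular cocommutative bialgebra H in a symmetric monoidal category, the morphism S = (id ⊗ (l∘μ)) ∘ (γ ⊗ id) ∘ (id ⊗ (Δ∘L)) satisfies the left antipode axiom: μ ∘ (S ⊗ id) ∘ Δ = η ∘ ε. -/
/-!
Writing `L₁ ⊗ L₂` for `Δ L`, the morphism of the statement is `S x = L₁ · l(x L₂)`, and its mirror
image `T x = l(L₁ x) · L₂` is built the same way from the left-hand (co)integral properties.
Multiplicativity of `Δ` turns `x₁ S(x₂)` into `(id ⊗ l)(Δ (x L))`, which the cointegral property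
and then the integral property reduce to `ε(x) l(L) = ε(x)`; so `S` is a right convolution inverse
of the identity, and symmetrically `T` is a left one. In the convolution monoid a left and a right
inverse coincide, so `S = T` is also a left inverse of the identity.
-/

open CategoryTheory MonoidalCategory

namespace CategoryTheory

variable {C : Type*} [Category C] [MonoidalCategory C]

open CategoryTheory.MonObj CategoryTheory.ComonObj in
theorem leftAntipode_eq_rightAntipode (H : C) [ComonObj H] [MonObj H] {T S : H ⟶ H}
    (hT : Δ[H] ≫ (T ▷ H) ≫ μ[H] = ε[H] ≫ η[H]) (hS : Δ[H] ≫ (H ◁ S) ≫ μ[H] = ε[H] ≫ η[H]) :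
    T = S :=
  left_inv_eq_right_inv (M := Conv H H) (a := 𝟙 H)
    (show Δ[H] ≫ (T ▷ H) ≫ (H ◁ 𝟙 H) ≫ μ[H] = ε[H] ≫ η[H] by
      rwa [MonoidalCategory.whiskerLeft_id, Category.id_comp])
    (show Δ[H] ≫ (𝟙 H ▷ H) ≫ (H ◁ S) ≫ μ[H] = ε[H] ≫ η[H] by
      rwa [MonoidalCategory.id_whiskerRight, Category.id_comp])

variable [BraidedCategory C] (H : C)

def contractRight (c : 𝟙_ C ⟶ H ⊗ H) (g : H ⊗ H ⟶ 𝟙_ C) : H ⟶ H :=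
  (ρ_ H).inv ≫ (H ◁ c) ≫ (α_ H H H).inv ≫ ((β_ H H).hom ▷ H) ≫ (α_ H H H).hom ≫ (H ◁ g) ≫
    (ρ_ H).hom

def contractLeft (c : 𝟙_ C ⟶ H ⊗ H) (g : H ⊗ H ⟶ 𝟙_ C) : H ⟶ H :=
  (λ_ H).inv ≫ (c ▷ H) ≫ (α_ H H H).hom ≫ (H ◁ (β_ H H).hom) ≫ (α_ H H H).inv ≫ (g ▷ H) ≫
    (λ_ H).hom

theorem comp_whiskerLeft_contractRight_comp (d : H ⟶ H ⊗ H) (m : H ⊗ H ⟶ H) (c : 𝟙_ C ⟶ H ⊗ H)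
    (g : H ⊗ H ⟶ 𝟙_ C) :
    d ≫ (H ◁ contractRight H c g) ≫ m
      = (ρ_ H).inv ≫ (d ▷ 𝟙_ C) ≫ ((H ⊗ H) ◁ c) ≫ tensorμ H H H H ≫ (m ⊗ₘ g) ≫ (ρ_ H).hom := by
  rw [contractRight, tensorμ, MonoidalCategory.tensorHom_def m g]
  simp only [MonoidalCategory.whiskerLeft_comp, Category.assoc]
  slice_rhs 1 2 => rw [← rightUnitor_inv_naturality]
  slice_rhs 3 4 => rw [associator_naturality_right]
  slice_rhs 9 10 => rw [← whisker_exchange]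
  slice_rhs 10 11 => rw [rightUnitor_naturality]
  slice_rhs 8 9 => rw [← associator_inv_naturality_right]
  simp only [Category.assoc]
  congr 1
  monoidal

theorem comp_contractLeft_whiskerRight_comp (d : H ⟶ H ⊗ H) (m : H ⊗ H ⟶ H) (c : 𝟙_ C ⟶ H ⊗ H)
    (g : H ⊗ H ⟶ 𝟙_ C) :
    d ≫ (contractLeft H c g ▷ H) ≫ m
      = (λ_ H).inv ≫ (𝟙_ C ◁ d) ≫ (c ▷ (H ⊗ H)) ≫ tensorμ H H H H ≫ (g ⊗ₘ m) ≫ (λ_ H).hom := by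
  rw [contractLeft, tensorμ, MonoidalCategory.tensorHom_def g m]
  simp only [Category.assoc, comp_whiskerRight, whiskerRight_tensor]
  slice_rhs 1 2 => rw [← leftUnitor_inv_naturality]
  slice_rhs 14 15 => rw [leftUnitor_naturality]
  congr 1
  monoidal

variable {H} {μ : H ⊗ H ⟶ H} {η : 𝟙_ C ⟶ H} {Δ : H ⟶ H ⊗ H} {ε : H ⟶ 𝟙_ C}
  {l : H ⟶ 𝟙_ C} {L : 𝟙_ C ⟶ H}

theorem comul_whiskerLeft_contractRight_mul_eq_counit_unit
    (mul_comul : μ ≫ Δ = (Δ ⊗ₘ Δ) ≫ tensorμ H H H H ≫ (μ ⊗ₘ μ))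
    (cointegral : Δ ≫ (H ◁ l) ≫ (ρ_ H).hom = l ≫ η)
    (integral : (H ◁ L) ≫ μ = (ρ_ H).hom ≫ ε ≫ L) (normalization : L ≫ l = 𝟙 (𝟙_ C)) :
    Δ ≫ (H ◁ contractRight H (L ≫ Δ) (μ ≫ l)) ≫ μ = ε ≫ η := by
  rw [comp_whiskerLeft_contractRight_comp, show μ ⊗ₘ (μ ≫ l) = (μ ⊗ₘ μ) ≫ (H ◁ l) by
    rw [← id_tensorHom, tensorHom_comp_tensorHom, Category.comp_id]]
  slice_lhs 3 3 => rw [MonoidalCategory.whiskerLeft_comp]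
  slice_lhs 2 3 => rw [← whisker_exchange]
  slice_lhs 3 4 => rw [← MonoidalCategory.tensorHom_def]
  slice_lhs 3 5 => rw [← mul_comul]
  slice_lhs 4 6 => rw [cointegral]
  slice_lhs 2 3 => rw [integral]
  simp [normalization]

theorem comul_contractLeft_whiskerRight_mul_eq_counit_unit
    (mul_comul : μ ≫ Δ = (Δ ⊗ₘ Δ) ≫ tensorμ H H H H ≫ (μ ⊗ₘ μ))
    (cointegral : Δ ≫ (l ▷ H) ≫ (λ_ H).hom = l ≫ η)
    (integral : (L ▷ H) ≫ μ = (λ_ H).hom ≫ ε ≫ L) (normalization : L ≫ l = 𝟙 (𝟙_ C)) :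
    Δ ≫ (contractLeft H (L ≫ Δ) (μ ≫ l) ▷ H) ≫ μ = ε ≫ η := by
  rw [comp_contractLeft_whiskerRight_comp, show (μ ≫ l) ⊗ₘ μ = (μ ⊗ₘ μ) ≫ (l ▷ H) by
    rw [← tensorHom_id, tensorHom_comp_tensorHom, Category.comp_id]]
  slice_lhs 3 3 => rw [comp_whiskerRight]
  slice_lhs 2 3 => rw [whisker_exchange]
  slice_lhs 3 4 => rw [← MonoidalCategory.tensorHom_def']
  slice_lhs 3 5 => rw [← mul_comul]
  slice_lhs 4 6 => rw [cointegral]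
  slice_lhs 2 3 => rw [integral]
  simp [normalization]

end CategoryTheory

theorem left_antipode_of_unimodular_cocomm_bialgebra_general
    {C : Type*} [Category C] [MonoidalCategory C] [SymmetricCategory C]
    (H : C) (μ : H ⊗ H ⟶ H) (η : 𝟙_ C ⟶ H) (Δ : H ⟶ H ⊗ H) (ε : H ⟶ 𝟙_ C)
    (l : H ⟶ 𝟙_ C) (L : 𝟙_ C ⟶ H)
    (mul_assoc' : (μ ▷ H) ≫ μ = (α_ H H H).hom ≫ (H ◁ μ) ≫ μ)
    (one_mul' : (η ▷ H) ≫ μ = (λ_ H).hom)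
    (mul_one' : (H ◁ η) ≫ μ = (ρ_ H).hom)
    (comul_assoc' : Δ ≫ (Δ ▷ H) ≫ (α_ H H H).hom = Δ ≫ (H ◁ Δ))
    (counit_comul' : Δ ≫ (ε ▷ H) = (λ_ H).inv)
    (comul_counit' : Δ ≫ (H ◁ ε) = (ρ_ H).inv)
    (mul_comul' : μ ≫ Δ = (Δ ⊗ₘ Δ) ≫ tensorμ H H H H ≫ (μ ⊗ₘ μ))
    (cointegral_l : Δ ≫ (l ▷ H) ≫ (λ_ H).hom = l ≫ η)
    (cointegral_r : Δ ≫ (H ◁ l) ≫ (ρ_ H).hom = l ≫ η)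
    (integral_l : (L ▷ H) ≫ μ = (λ_ H).hom ≫ ε ≫ L)
    (integral_r : (H ◁ L) ≫ μ = (ρ_ H).hom ≫ ε ≫ L)
    (normalization : L ≫ l = 𝟙 (𝟙_ C)) :
    Δ ≫ (((ρ_ H).inv ≫ (H ◁ (L ≫ Δ)) ≫ (α_ H H H).inv ≫
        ((β_ H H).hom ▷ H) ≫ (α_ H H H).hom ≫ (H ◁ (μ ≫ l)) ≫ (ρ_ H).hom) ▷ H) ≫ μ
      = ε ≫ η := by
  let _ : MonObj H := ⟨η, μ, one_mul', mul_one', mul_assoc'⟩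
  let _ : ComonObj H := ⟨ε, Δ, counit_comul', comul_counit', comul_assoc'.symm⟩
  have left_antipode := comul_contractLeft_whiskerRight_mul_eq_counit_unit mul_comul'
    cointegral_l integral_l normalization
  have right_antipode := comul_whiskerLeft_contractRight_mul_eq_counit_unit mul_comul'
    cointegral_r integral_r normalization
  rwa [leftAntipode_eq_rightAntipode H left_antipode right_antipode] at left_antipode

/-- In a unimodular cocommutative bialgebra `H` in a symmetric monoidal category,
the morphism `S = (id ⊗ (l∘μ)) ∘ (γ ⊗ id) ∘ (id ⊗ (Δ∘L))` satisfies the left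
antipode axiom `μ ∘ (S ⊗ id) ∘ Δ = η ∘ ε`. -/
theorem left_antipode_of_unimodular_cocomm_bialgebra
    {C : Type*} [Category C] [MonoidalCategory C] [SymmetricCategory C]
    (H : C) (μ : H ⊗ H ⟶ H) (η : 𝟙_ C ⟶ H) (Δ : H ⟶ H ⊗ H) (ε : H ⟶ 𝟙_ C)
    (l : H ⟶ 𝟙_ C) (L : 𝟙_ C ⟶ H)
    (mul_assoc' : (μ ▷ H) ≫ μ = (α_ H H H).hom ≫ (H ◁ μ) ≫ μ)
    (one_mul' : (η ▷ H) ≫ μ = (λ_ H).hom)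
    (mul_one' : (H ◁ η) ≫ μ = (ρ_ H).hom)
    (comul_assoc' : Δ ≫ (Δ ▷ H) ≫ (α_ H H H).hom = Δ ≫ (H ◁ Δ))
    (counit_comul' : Δ ≫ (ε ▷ H) = (λ_ H).inv)
    (comul_counit' : Δ ≫ (H ◁ ε) = (ρ_ H).inv)
    (mul_comul' : μ ≫ Δ = (Δ ⊗ₘ Δ) ≫ tensorμ H H H H ≫ (μ ⊗ₘ μ))
    (mul_counit' : μ ≫ ε = (ε ⊗ₘ ε) ≫ (λ_ (𝟙_ C)).hom)
    (one_comul' : η ≫ Δ = (λ_ (𝟙_ C)).inv ≫ (η ⊗ₘ η))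
    (one_counit' : η ≫ ε = 𝟙 (𝟙_ C))
    (cocomm : Δ ≫ (β_ H H).hom = Δ)
    (cointegral_l : Δ ≫ (l ▷ H) ≫ (λ_ H).hom = l ≫ η)
    (cointegral_r : Δ ≫ (H ◁ l) ≫ (ρ_ H).hom = l ≫ η)
    (integral_l : (L ▷ H) ≫ μ = (λ_ H).hom ≫ ε ≫ L)
    (integral_r : (H ◁ L) ≫ μ = (ρ_ H).hom ≫ ε ≫ L)
    (normalization : L ≫ l = 𝟙 (𝟙_ C)) :
    Δ ≫ (((ρ_ H).inv ≫ (H ◁ (L ≫ Δ)) ≫ (α_ H H H).inv ≫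
        ((β_ H H).hom ▷ H) ≫ (α_ H H H).hom ≫ (H ◁ (μ ≫ l)) ≫ (ρ_ H).hom) ▷ H) ≫ μ
      = ε ≫ η :=
  left_antipode_of_unimodular_cocomm_bialgebra_general H μ η Δ ε l L mul_assoc' one_mul' mul_one'
    comul_assoc' counit_comul' comul_counit' mul_comul' cointegral_l cointegral_r integral_l
    integral_r normalization
end

section
/- In a unimodular cocommutative Hopf algebra H in a symmetric monoidal category, the antipode fixes the integral and cointegral: S ∘ L = L and l ∘ S = l. -/
/-!
The antipode is the two-sided convolution inverse of `𝟙 H`, so it coincides with any one-sided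
convolution inverse. Writing `ΔΛ = Λ₁ ⊗ Λ₂`, the map `T x = l(Λ₁ x) Λ₂` is a left inverse:
`(T * 𝟙) x = l(Λ₁ x₁) Λ₂ x₂ = (l ⊗ 1) Δ(Λ x) = ε(x) l(Λ) = ε(x)`, as `Δ` is multiplicative and
`Λ` is an integral. Symmetrically `T' x = Λ₁ l(x Λ₂)` is a right inverse. Hence
`S Λ = T Λ = l(Λ₁ Λ) Λ₂ = l(Λ) ε(Λ₁) Λ₂ = Λ` and `l (S x) = l (T' x) = l(x l(Λ₁) Λ₂) = l(x)`.
-/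

open CategoryTheory MonoidalCategory

section ConvolutionInverse

open MonObj ComonObj

lemma conv_left_inv_eq_right_inv {C : Type*} [Category C] [MonoidalCategory C] {X : C} [MonObj X]
    [ComonObj X] {f g : X ⟶ X} (hf : Δ ≫ f ▷ X ≫ μ = ε ≫ η) (hg : Δ ≫ X ◁ g ≫ μ = ε ≫ η) :
    f = g :=
  left_inv_eq_right_inv (M := Conv X X)
    ((Conv.mul_eq f (𝟙 X)).trans (by rw [whiskerLeft_id, Category.id_comp]; exact hf))
    ((Conv.mul_eq (𝟙 X) g).trans (by rw [id_whiskerRight, Category.id_comp]; exact hg))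

end ConvolutionInverse

section IntegralInverses

variable {C : Type*} [Category C] [MonoidalCategory C] [BraidedCategory C] {H : C}

/-- `x ↦ l(Λ₁ x) Λ₂`, where `ΔΛ = Λ₁ ⊗ Λ₂`. -/
def integralLeftInverse (μ : H ⊗ H ⟶ H) (Δ : H ⟶ H ⊗ H) (L : 𝟙_ C ⟶ H) (l : H ⟶ 𝟙_ C) :
    H ⟶ H :=
  (λ_ H).inv ≫ (L ≫ Δ) ▷ H ≫ (α_ H H H).hom ≫ H ◁ (β_ H H).hom ≫ (α_ H H H).inv ≫
    (μ ≫ l) ▷ H ≫ (λ_ H).hom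

/-- `x ↦ Λ₁ l(x Λ₂)`, where `ΔΛ = Λ₁ ⊗ Λ₂`. -/
def integralRightInverse (μ : H ⊗ H ⟶ H) (Δ : H ⟶ H ⊗ H) (L : 𝟙_ C ⟶ H) (l : H ⟶ 𝟙_ C) :
    H ⟶ H :=
  (ρ_ H).inv ≫ H ◁ (L ≫ Δ) ≫ (α_ H H H).inv ≫ (β_ H H).hom ▷ H ≫ (α_ H H H).hom ≫
    H ◁ (μ ≫ l) ≫ (ρ_ H).hom

variable {μ : H ⊗ H ⟶ H} {η : 𝟙_ C ⟶ H} {Δ : H ⟶ H ⊗ H} {ε : H ⟶ 𝟙_ C}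
  {L : 𝟙_ C ⟶ H} {l : H ⟶ 𝟙_ C}

lemma integralLeftInverse_conv_id
    (mul_comul : μ ≫ Δ = (Δ ⊗ₘ Δ) ≫ tensorμ H H H H ≫ (μ ⊗ₘ μ))
    (integral_l : L ▷ H ≫ μ = (λ_ H).hom ≫ ε ≫ L)
    (cointegral_l : Δ ≫ l ▷ H ≫ (λ_ H).hom = l ≫ η) (normalization : L ≫ l = 𝟙 (𝟙_ C)) :
    Δ ≫ integralLeftInverse μ Δ L l ▷ H ≫ μ = ε ≫ η := by
  calc _ = Δ ≫ (λ_ (H ⊗ H)).inv ≫ L ▷ (H ⊗ H) ≫ Δ ▷ (H ⊗ H) ≫ tensorμ H H H H ≫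
          μ ▷ (H ⊗ H) ≫ l ▷ (H ⊗ H) ≫ (λ_ (H ⊗ H)).hom ≫ μ := by
        simp only [integralLeftInverse, tensorμ]
        monoidal
    _ = (λ_ H).inv ≫ L ▷ H ≫ μ ≫ Δ ≫ l ▷ H ≫ (λ_ H).hom := by
        rw [reassoc_of% mul_comul, tensorHom_def Δ Δ, tensorHom_def μ μ]
        slice_rhs 7 8 => rw [whisker_exchange]
        slice_rhs 8 9 => rw [leftUnitor_naturality]
        slice_rhs 3 4 => rw [← whisker_exchange]
        slice_rhs 2 3 => rw [← whisker_exchange]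
        slice_rhs 1 2 => rw [← leftUnitor_inv_naturality]
        simp only [Category.assoc]
    _ = ε ≫ η := by
        rw [reassoc_of% integral_l, cointegral_l, reassoc_of% normalization,
          Iso.inv_hom_id_assoc]

lemma id_conv_integralRightInverse
    (mul_comul : μ ≫ Δ = (Δ ⊗ₘ Δ) ≫ tensorμ H H H H ≫ (μ ⊗ₘ μ))
    (integral_r : H ◁ L ≫ μ = (ρ_ H).hom ≫ ε ≫ L)
    (cointegral_r : Δ ≫ H ◁ l ≫ (ρ_ H).hom = l ≫ η) (normalization : L ≫ l = 𝟙 (𝟙_ C)) :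
    Δ ≫ H ◁ integralRightInverse μ Δ L l ≫ μ = ε ≫ η := by
  calc _ = Δ ≫ (ρ_ (H ⊗ H)).inv ≫ (H ⊗ H) ◁ L ≫ (H ⊗ H) ◁ Δ ≫ tensorμ H H H H ≫
          (H ⊗ H) ◁ μ ≫ (H ⊗ H) ◁ l ≫ (ρ_ (H ⊗ H)).hom ≫ μ := by
        simp only [integralRightInverse, tensorμ]
        monoidal
    _ = (ρ_ H).inv ≫ H ◁ L ≫ μ ≫ Δ ≫ H ◁ l ≫ (ρ_ H).hom := by
        rw [reassoc_of% mul_comul, tensorHom_def Δ Δ, tensorHom_def' μ μ]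
        slice_rhs 7 8 => rw [← whisker_exchange]
        slice_rhs 8 9 => rw [rightUnitor_naturality]
        slice_rhs 2 3 => rw [whisker_exchange]
        slice_rhs 1 2 => rw [← rightUnitor_inv_naturality]
        simp only [Category.assoc]
    _ = ε ≫ η := by
        rw [reassoc_of% integral_r, cointegral_r, reassoc_of% normalization,
          Iso.inv_hom_id_assoc]

lemma integral_comp_integralLeftInverse
    (counit_comul : Δ ≫ ε ▷ H = (λ_ H).inv)
    (integral_r : H ◁ L ≫ μ = (ρ_ H).hom ≫ ε ≫ L) (normalization : L ≫ l = 𝟙 (𝟙_ C)) :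
    L ≫ integralLeftInverse μ Δ L l = L := by
  calc _ = (λ_ (𝟙_ C)).inv ≫ (L ≫ Δ) ▷ 𝟙_ C ≫ (α_ H H (𝟙_ C)).hom ≫
        H ◁ (H ◁ L ≫ (β_ H H).hom) ≫ (α_ H H H).inv ≫ (μ ≫ l) ▷ H ≫ (λ_ H).hom := by
        rw [integralLeftInverse, leftUnitor_inv_naturality_assoc, whisker_exchange_assoc]
        monoidal
    _ = L ≫ Δ ≫ ((ρ_ H).inv ≫ H ◁ L ≫ μ ≫ l) ▷ H ≫ (λ_ H).hom := by
        rw [BraidedCategory.braiding_naturality_right, braiding_tensorUnit_right]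
        monoidal
    _ = L := by
        rw [reassoc_of% integral_r, normalization, Iso.inv_hom_id_assoc, Category.comp_id,
          reassoc_of% counit_comul, Iso.inv_hom_id, Category.comp_id]

lemma integralRightInverse_comp_cointegral
    (mul_one : H ◁ η ≫ μ = (ρ_ H).hom)
    (cointegral_l : Δ ≫ l ▷ H ≫ (λ_ H).hom = l ≫ η) (normalization : L ≫ l = 𝟙 (𝟙_ C)) :
    integralRightInverse μ Δ L l ≫ l = l := by
  calc _ = (ρ_ H).inv ≫ H ◁ (L ≫ Δ) ≫ (α_ H H H).inv ≫ ((β_ H H).hom ≫ l ▷ H) ▷ H ≫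
        (α_ (𝟙_ C) H H).hom ≫ 𝟙_ C ◁ μ ≫ (λ_ H).hom ≫ l := by
        simp only [integralRightInverse, Category.assoc]
        rw [← rightUnitor_naturality, whisker_exchange_assoc]
        monoidal
    _ = (ρ_ H).inv ≫ H ◁ (L ≫ Δ ≫ l ▷ H ≫ (λ_ H).hom) ≫ μ ≫ l := by
        rw [← BraidedCategory.braiding_naturality_right, braiding_tensorUnit_right]
        monoidal
    _ = l := by
        rw [cointegral_l, reassoc_of% normalization, reassoc_of% mul_one, Iso.inv_hom_id_assoc]

end IntegralInverses
theorem antipode_fixes_integrals_general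
    {C : Type*} [Category C] [MonoidalCategory C] [SymmetricCategory C]
    (H : C) (μ : H ⊗ H ⟶ H) (η : 𝟙_ C ⟶ H) (Δ : H ⟶ H ⊗ H) (ε : H ⟶ 𝟙_ C)
    (S : H ⟶ H) (l : H ⟶ 𝟙_ C) (L : 𝟙_ C ⟶ H)
    (mul_assoc' : (μ ▷ H) ≫ μ = (α_ H H H).hom ≫ (H ◁ μ) ≫ μ)
    (one_mul' : (η ▷ H) ≫ μ = (λ_ H).hom)
    (mul_one' : (H ◁ η) ≫ μ = (ρ_ H).hom)
    (comul_assoc' : Δ ≫ (Δ ▷ H) ≫ (α_ H H H).hom = Δ ≫ (H ◁ Δ))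
    (counit_comul' : Δ ≫ (ε ▷ H) = (λ_ H).inv)
    (comul_counit' : Δ ≫ (H ◁ ε) = (ρ_ H).inv)
    (mul_comul' : μ ≫ Δ = (Δ ⊗ₘ Δ) ≫ tensorμ H H H H ≫ (μ ⊗ₘ μ))
    (antipode_l : Δ ≫ (S ▷ H) ≫ μ = ε ≫ η)
    (antipode_r : Δ ≫ (H ◁ S) ≫ μ = ε ≫ η)
    (integral_l : (L ▷ H) ≫ μ = (λ_ H).hom ≫ ε ≫ L)
    (integral_r : (H ◁ L) ≫ μ = (ρ_ H).hom ≫ ε ≫ L)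
    (cointegral_l : Δ ≫ (l ▷ H) ≫ (λ_ H).hom = l ≫ η)
    (cointegral_r : Δ ≫ (H ◁ l) ≫ (ρ_ H).hom = l ≫ η)
    (normalization : L ≫ l = 𝟙 (𝟙_ C)) :
    L ≫ S = L ∧ S ≫ l = l := by
  let _ : MonObj H := ⟨η, μ, one_mul', mul_one', mul_assoc'⟩
  let _ : ComonObj H := ⟨ε, Δ, counit_comul', comul_counit', comul_assoc'.symm⟩
  constructor
  · have hS : integralLeftInverse μ Δ L l = S := conv_left_inv_eq_right_inv
      (integralLeftInverse_conv_id mul_comul' integral_l cointegral_l normalization) antipode_r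
    rw [← hS]
    exact integral_comp_integralLeftInverse counit_comul' integral_r normalization
  · have hS : S = integralRightInverse μ Δ L l := conv_left_inv_eq_right_inv antipode_l
      (id_conv_integralRightInverse mul_comul' integral_r cointegral_r normalization)
    rw [hS]
    exact integralRightInverse_comp_cointegral mul_one' cointegral_l normalization

/-- In a unimodular cocommutative Hopf algebra in a symmetric monoidal category, the antipode fixes the integral and the cointegral: `S ∘ L = L` and `l ∘ S = l`. -/
theorem antipode_fixes_integrals
    {C : Type*} [Category C] [MonoidalCategory C] [SymmetricCategory C]
    (H : C) (μ : H ⊗ H ⟶ H) (η : 𝟙_ C ⟶ H) (Δ : H ⟶ H ⊗ H) (ε : H ⟶ 𝟙_ C)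
    (S : H ⟶ H) (l : H ⟶ 𝟙_ C) (L : 𝟙_ C ⟶ H)
    (mul_assoc' : (μ ▷ H) ≫ μ = (α_ H H H).hom ≫ (H ◁ μ) ≫ μ)
    (one_mul' : (η ▷ H) ≫ μ = (λ_ H).hom)
    (mul_one' : (H ◁ η) ≫ μ = (ρ_ H).hom)
    (comul_assoc' : Δ ≫ (Δ ▷ H) ≫ (α_ H H H).hom = Δ ≫ (H ◁ Δ))
    (counit_comul' : Δ ≫ (ε ▷ H) = (λ_ H).inv)
    (comul_counit' : Δ ≫ (H ◁ ε) = (ρ_ H).inv)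
    (mul_comul' : μ ≫ Δ = (Δ ⊗ₘ Δ) ≫ tensorμ H H H H ≫ (μ ⊗ₘ μ))
    (mul_counit' : μ ≫ ε = (ε ⊗ₘ ε) ≫ (λ_ (𝟙_ C)).hom)
    (one_comul' : η ≫ Δ = (λ_ (𝟙_ C)).inv ≫ (η ⊗ₘ η))
    (one_counit' : η ≫ ε = 𝟙 (𝟙_ C))
    (cocomm : Δ ≫ (β_ H H).hom = Δ)
    (antipode_l : Δ ≫ (S ▷ H) ≫ μ = ε ≫ η)
    (antipode_r : Δ ≫ (H ◁ S) ≫ μ = ε ≫ η)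
    (integral_l : (L ▷ H) ≫ μ = (λ_ H).hom ≫ ε ≫ L)
    (integral_r : (H ◁ L) ≫ μ = (ρ_ H).hom ≫ ε ≫ L)
    (cointegral_l : Δ ≫ (l ▷ H) ≫ (λ_ H).hom = l ≫ η)
    (cointegral_r : Δ ≫ (H ◁ l) ≫ (ρ_ H).hom = l ≫ η)
    (normalization : L ≫ l = 𝟙 (𝟙_ C)) :
    L ≫ S = L ∧ S ≫ l = l :=
  antipode_fixes_integrals_general H μ η Δ ε S l L mul_assoc' one_mul' mul_one' comul_assoc'
    counit_comul' comul_counit' mul_comul' antipode_l antipode_r integral_l integral_r cointegral_l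
    cointegral_r normalization
end

section
/- In a unimodular cocommutative Hopf algebra H in a symmetric monoidal category, the pairing l ∘ μ is symmetric: l ∘ μ ∘ γ = l ∘ μ. -/
/-!
The maps `y ↦ ∑ l(L₁ y) L₂` and `x ↦ ∑ l(x L₂) L₁` are convolution inverses of the identity,
so both equal the antipode `S`. Evaluating `∑ l(x L₂) l(L₁ y)` in two ways gives
`l(S x · y) = l(x · S y)`, and `l ∘ S = l` because `∑ l(L₁) L₂ = l(L) = 1`. Cocommutativity makes
`S` an involution, and `S` reverses products, so
`l(x y) = l(S x · S y) = l(S (y x)) = l(y x)`.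
-/

open CategoryTheory MonoidalCategory

namespace CategoryTheory

open CategoryTheory.MonObj CategoryTheory.ComonObj CategoryTheory.BimonObj CategoryTheory.HopfObj

lemma whiskerLeft_braiding_contract {C : Type*} [Category C] [MonoidalCategory C]
    [SymmetricCategory C] {X Y Z : C} (s : X ⊗ Z ⟶ 𝟙_ C) :
    X ◁ (β_ Y Z).hom ≫ (α_ X Z Y).inv ≫ s ▷ Y ≫ (λ_ Y).hom =
      (α_ X Y Z).inv ≫ (β_ X Y).hom ▷ Z ≫ (α_ Y X Z).hom ≫ Y ◁ s ≫ (ρ_ Y).hom := by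
  rw [← braiding_rightUnitor, BraidedCategory.braiding_naturality_left_assoc,
    BraidedCategory.braiding_tensor_left_hom]
  simp only [Category.assoc, Iso.inv_hom_id_assoc]
  rw [← MonoidalCategory.whiskerLeft_comp_assoc, SymmetricCategory.symmetry]
  simp

lemma conv_left_inv_eq_right_inv {C : Type*} [Category C] [MonoidalCategory C] {M N : C}
    [ComonObj M] [MonObj N] {a b c : M ⟶ N}
    (hba : Δ[M] ≫ b ▷ M ≫ N ◁ a ≫ μ[N] = ε[M] ≫ η[N])
    (hac : Δ[M] ≫ a ▷ M ≫ N ◁ c ≫ μ[N] = ε[M] ≫ η[N]) : b = c :=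
  left_inv_eq_right_inv (M := Conv M N) hba hac

lemma scalar_whisker_exchange {C : Type*} [Category C] [MonoidalCategory C] {X Y : C}
    (s : X ⟶ 𝟙_ C) (t : Y ⟶ 𝟙_ C) : s ▷ Y ≫ (λ_ Y).hom ≫ t = X ◁ t ≫ (ρ_ X).hom ≫ s := by
  rw [← rightUnitor_naturality, whisker_exchange_assoc]
  monoidal

section Integral

variable {C : Type*} [Category C] [MonoidalCategory C] {A : C} [MonObj A] [ComonObj A]

def IsLeftIntegral (L : 𝟙_ C ⟶ A) : Prop := L ▷ A ≫ μ[A] = (λ_ A).hom ≫ ε[A] ≫ L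

def IsRightIntegral (L : 𝟙_ C ⟶ A) : Prop := A ◁ L ≫ μ[A] = (ρ_ A).hom ≫ ε[A] ≫ L

def IsLeftCointegral (l : A ⟶ 𝟙_ C) : Prop := Δ[A] ≫ l ▷ A ≫ (λ_ A).hom = l ≫ η[A]

def IsRightCointegral (l : A ⟶ 𝟙_ C) : Prop := Δ[A] ≫ A ◁ l ≫ (ρ_ A).hom = l ≫ η[A]

end Integral

namespace HopfObj

section Braided

variable {C : Type*} [Category C] [MonoidalCategory C] [BraidedCategory C] {A : C} [HopfObj A]

lemma eq_antipode_of_conv_id {f : A ⟶ A} (h : Δ[A] ≫ f ▷ A ≫ μ[A] = ε[A] ≫ η[A]) :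
    f = 𝒮[A] :=
  conv_left_inv_eq_right_inv (a := 𝟙 A) (by simpa using h) (by simp)

lemma eq_antipode_of_id_conv {f : A ⟶ A} (h : Δ[A] ≫ A ◁ f ≫ μ[A] = ε[A] ≫ η[A]) :
    f = 𝒮[A] :=
  (conv_left_inv_eq_right_inv (a := 𝟙 A) (by simp) (by simpa using h)).symm

lemma antipode_antipode_of_cocomm (cocomm : Δ[A] ≫ (β_ A A).hom = Δ[A]) :
    𝒮[A] ≫ 𝒮[A] = 𝟙 A := by
  refine (conv_left_inv_eq_right_inv (a := 𝒮[A]) (by simp) ?_).symm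
  have split : (𝒮[A] ≫ 𝒮[A]) ⊗ₘ 𝒮[A] = 𝒮[A] ▷ A ≫ (𝒮[A] ⊗ₘ 𝒮[A]) := by
    rw [MonoidalCategory.tensorHom_def, MonoidalCategory.tensorHom_def, comp_whiskerRight,
      Category.assoc]
  rw [← tensorHom_def_assoc, ← cocomm, Category.assoc, ← BraidedCategory.braiding_naturality_assoc,
    split, Category.assoc, ← mul_antipode, antipode_left_assoc, one_antipode]

variable (L : 𝟙_ C ⟶ A) (l : A ⟶ 𝟙_ C)

/-- `y ↦ ∑ l(L₁ y) L₂` -/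
def fourierLeft : A ⟶ A :=
  (λ_ A).inv ≫ (L ≫ Δ[A]) ▷ A ≫ (α_ A A A).hom ≫ A ◁ (β_ A A).hom ≫ (α_ A A A).inv ≫
    (μ[A] ≫ l) ▷ A ≫ (λ_ A).hom

/-- `x ↦ ∑ l(x L₂) L₁` -/
def fourierRight : A ⟶ A :=
  (ρ_ A).inv ≫ A ◁ (L ≫ Δ[A]) ≫ (α_ A A A).inv ≫ (β_ A A).hom ▷ A ≫ (α_ A A A).hom ≫
    A ◁ (μ[A] ≫ l) ≫ (ρ_ A).hom

lemma fourierLeft_conv_id : Δ[A] ≫ fourierLeft L l ▷ A ≫ μ[A] =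
    (λ_ A).inv ≫ L ▷ A ≫ μ[A] ≫ Δ[A] ≫ l ▷ A ≫ (λ_ A).hom := by
  have fuse : fourierLeft L l ▷ A ≫ μ[A] = (λ_ (A ⊗ A)).inv ≫ (L ≫ Δ[A]) ▷ (A ⊗ A) ≫
      tensorμ A A A A ≫ (μ[A] ⊗ₘ μ[A]) ≫ l ▷ A ≫ (λ_ A).hom := by
    simp only [fourierLeft, tensorμ, MonoidalCategory.tensorHom_def, comp_whiskerRight,
      Category.assoc, whisker_assoc]
    rw [whisker_exchange_assoc]
    monoidal
  have head : Δ[A] ≫ (λ_ (A ⊗ A)).inv ≫ (L ≫ Δ[A]) ▷ (A ⊗ A) =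
      (λ_ A).inv ≫ L ▷ A ≫ (Δ[A] ⊗ₘ Δ[A]) := by
    simp only [comp_whiskerRight, MonoidalCategory.tensorHom_def]
    simp only [← whisker_exchange_assoc, ← whisker_exchange]
    monoidal
  rw [mul_comul_assoc, fuse, reassoc_of% head]

lemma id_conv_fourierRight : Δ[A] ≫ A ◁ fourierRight L l ≫ μ[A] =
    (ρ_ A).inv ≫ A ◁ L ≫ μ[A] ≫ Δ[A] ≫ A ◁ l ≫ (ρ_ A).hom := by
  have unit : Δ[A] ≫ A ◁ (ρ_ A).inv ≫ A ◁ (A ◁ L) =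
      (ρ_ A).inv ≫ A ◁ L ≫ Δ[A] ▷ A ≫ (α_ A A A).hom := by
    rw [whisker_exchange_assoc]
    monoidal
  have comul : Δ[A] ▷ A ≫ (α_ A A A).hom ≫ A ◁ (A ◁ Δ[A]) =
      A ◁ Δ[A] ≫ Δ[A] ▷ (A ⊗ A) ≫ (α_ A A (A ⊗ A)).hom := by
    rw [whisker_exchange_assoc]
    monoidal
  simp only [fourierRight, MonoidalCategory.whiskerLeft_comp, Category.assoc]
  rw [reassoc_of% unit, reassoc_of% comul, mul_comul_assoc]
  simp only [tensorμ, MonoidalCategory.tensorHom_def, Category.assoc]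
  simp only [← whisker_exchange_assoc]
  monoidal

variable {L l}

lemma fourierLeft_eq_antipode (hL : IsLeftIntegral L) (hl : IsLeftCointegral l)
    (hLl : L ≫ l = 𝟙 _) : fourierLeft L l = 𝒮[A] := by
  refine eq_antipode_of_conv_id ?_
  rw [fourierLeft_conv_id, hl, reassoc_of% hL, Iso.inv_hom_id_assoc, reassoc_of% hLl]

lemma fourierRight_eq_antipode (hL : IsRightIntegral L) (hl : IsRightCointegral l)
    (hLl : L ≫ l = 𝟙 _) : fourierRight L l = 𝒮[A] := by
  refine eq_antipode_of_id_conv ?_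
  rw [id_conv_fourierRight, hl, reassoc_of% hL, Iso.inv_hom_id_assoc, reassoc_of% hLl]

end Braided

section Symmetric

variable {C : Type*} [Category C] [MonoidalCategory C] [SymmetricCategory C] {A : C} [HopfObj A]
  (L : 𝟙_ C ⟶ A) (l : A ⟶ 𝟙_ C)

lemma fourierLeft_eq : fourierLeft L l =
    (λ_ A).inv ≫ (L ≫ Δ[A] ≫ (β_ A A).hom) ▷ A ≫ (α_ A A A).hom ≫ A ◁ (μ[A] ≫ l) ≫
      (ρ_ A).hom := by
  rw [fourierLeft, whiskerLeft_braiding_contract]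
  simp only [comp_whiskerRight, Category.assoc, Iso.hom_inv_id_assoc]

lemma fourierRight_eq : fourierRight L l =
    (ρ_ A).inv ≫ A ◁ (L ≫ Δ[A] ≫ (β_ A A).hom) ≫ (α_ A A A).inv ≫ (μ[A] ≫ l) ▷ A ≫
      (λ_ A).hom := by
  simp only [fourierRight, MonoidalCategory.whiskerLeft_comp, Category.assoc,
    whiskerLeft_braiding_contract]

lemma fourierRight_whiskerRight_mul_comp :
    fourierRight L l ▷ A ≫ μ[A] ≫ l = A ◁ fourierLeft L l ≫ μ[A] ≫ l := by
  let P : A ⊗ A ⟶ (A ⊗ A) ⊗ (A ⊗ A) :=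
    A ◁ ((λ_ A).inv ≫ (L ≫ Δ[A] ≫ (β_ A A).hom) ▷ A ≫ (α_ A A A).hom) ≫ (α_ A A (A ⊗ A)).inv
  calc fourierRight L l ▷ A ≫ μ[A] ≫ l
      = P ≫ (μ[A] ≫ l) ▷ (A ⊗ A) ≫ (λ_ _).hom ≫ μ[A] ≫ l := by
        simp only [P, fourierRight_eq, comp_whiskerRight, MonoidalCategory.whiskerLeft_comp,
          Category.assoc, whisker_assoc]
        monoidal
    _ = P ≫ (A ⊗ A) ◁ (μ[A] ≫ l) ≫ (ρ_ _).hom ≫ μ[A] ≫ l := by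
        rw [scalar_whisker_exchange]
    _ = A ◁ fourierLeft L l ≫ μ[A] ≫ l := by
        simp only [P, fourierLeft_eq, comp_whiskerRight, MonoidalCategory.whiskerLeft_comp,
          Category.assoc]
        monoidal

variable {L l}

lemma fourierRight_comp (hl : IsLeftCointegral l) (hLl : L ≫ l = 𝟙 _) :
    fourierRight L l ≫ l = l :=
  calc fourierRight L l ≫ l
      = (ρ_ A).inv ≫ A ◁ (L ≫ Δ[A] ≫ (β_ A A).hom ≫ A ◁ l ≫ (ρ_ A).hom) ≫ μ[A] ≫ l := by
        simp only [fourierRight_eq, Category.assoc, scalar_whisker_exchange (μ[A] ≫ l) l]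
        monoidal
    _ = (ρ_ A).inv ≫ A ◁ η[A] ≫ μ[A] ≫ l := by
        rw [← BraidedCategory.braiding_naturality_left_assoc, braiding_rightUnitor, hl,
          reassoc_of% hLl]
    _ = l := by simp

lemma antipode_whiskerRight_mul_comp (hL : IsLeftIntegral L) (hL' : IsRightIntegral L)
    (hl : IsLeftCointegral l) (hl' : IsRightCointegral l) (hLl : L ≫ l = 𝟙 _) :
    𝒮[A] ▷ A ≫ μ[A] ≫ l = A ◁ 𝒮[A] ≫ μ[A] ≫ l := by
  simpa only [fourierLeft_eq_antipode hL hl hLl, fourierRight_eq_antipode hL' hl' hLl] using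
    fourierRight_whiskerRight_mul_comp L l

lemma antipode_comp_cointegral (hL' : IsRightIntegral L) (hl : IsLeftCointegral l)
    (hl' : IsRightCointegral l) (hLl : L ≫ l = 𝟙 _) : 𝒮[A] ≫ l = l := by
  rw [← fourierRight_eq_antipode hL' hl' hLl, fourierRight_comp hl hLl]

lemma braiding_mul_comp_cointegral (cocomm : Δ[A] ≫ (β_ A A).hom = Δ[A])
    (hL : IsLeftIntegral L) (hL' : IsRightIntegral L)
    (hl : IsLeftCointegral l) (hl' : IsRightCointegral l) (hLl : L ≫ l = 𝟙 _) :
    (β_ A A).hom ≫ μ[A] ≫ l = μ[A] ≫ l :=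
  calc (β_ A A).hom ≫ μ[A] ≫ l
      = (β_ A A).hom ≫ μ[A] ≫ 𝒮[A] ≫ l := by rw [antipode_comp_cointegral hL' hl hl' hLl]
    _ = (𝒮[A] ⊗ₘ 𝒮[A]) ≫ μ[A] ≫ l := by
        rw [reassoc_of% mul_antipode, BraidedCategory.braiding_naturality_assoc,
          SymmetricCategory.symmetry_assoc]
    _ = 𝒮[A] ▷ A ≫ 𝒮[A] ▷ A ≫ μ[A] ≫ l := by
        rw [tensorHom_def_assoc, ← antipode_whiskerRight_mul_comp hL hL' hl hl' hLl]
    _ = μ[A] ≫ l := by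
        rw [← comp_whiskerRight_assoc, antipode_antipode_of_cocomm cocomm, id_whiskerRight,
          Category.id_comp]

end Symmetric

end HopfObj
end CategoryTheory

/-- In a unimodular cocommutative Hopf algebra in a symmetric monoidal category, the pairing `l ∘ μ` is symmetric: `l ∘ μ ∘ γ = l ∘ μ`. -/
theorem pairing_symmetric
    {C : Type*} [Category C] [MonoidalCategory C] [SymmetricCategory C]
    (H : C) (μ : H ⊗ H ⟶ H) (η : 𝟙_ C ⟶ H) (Δ : H ⟶ H ⊗ H) (ε : H ⟶ 𝟙_ C)
    (S : H ⟶ H) (l : H ⟶ 𝟙_ C) (L : 𝟙_ C ⟶ H)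
    (mul_assoc' : (μ ▷ H) ≫ μ = (α_ H H H).hom ≫ (H ◁ μ) ≫ μ)
    (one_mul' : (η ▷ H) ≫ μ = (λ_ H).hom)
    (mul_one' : (H ◁ η) ≫ μ = (ρ_ H).hom)
    (comul_assoc' : Δ ≫ (Δ ▷ H) ≫ (α_ H H H).hom = Δ ≫ (H ◁ Δ))
    (counit_comul' : Δ ≫ (ε ▷ H) = (λ_ H).inv)
    (comul_counit' : Δ ≫ (H ◁ ε) = (ρ_ H).inv)
    (mul_comul' : μ ≫ Δ = (Δ ⊗ₘ Δ) ≫ tensorμ H H H H ≫ (μ ⊗ₘ μ))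
    (mul_counit' : μ ≫ ε = (ε ⊗ₘ ε) ≫ (λ_ (𝟙_ C)).hom)
    (one_comul' : η ≫ Δ = (λ_ (𝟙_ C)).inv ≫ (η ⊗ₘ η))
    (one_counit' : η ≫ ε = 𝟙 (𝟙_ C))
    (cocomm : Δ ≫ (β_ H H).hom = Δ)
    (antipode_l : Δ ≫ (S ▷ H) ≫ μ = ε ≫ η)
    (antipode_r : Δ ≫ (H ◁ S) ≫ μ = ε ≫ η)
    (integral_l : (L ▷ H) ≫ μ = (λ_ H).hom ≫ ε ≫ L)
    (integral_r : (H ◁ L) ≫ μ = (ρ_ H).hom ≫ ε ≫ L)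
    (cointegral_l : Δ ≫ (l ▷ H) ≫ (λ_ H).hom = l ≫ η)
    (cointegral_r : Δ ≫ (H ◁ l) ≫ (ρ_ H).hom = l ≫ η)
    (normalization : L ≫ l = 𝟙 (𝟙_ C)) :
    (β_ H H).hom ≫ μ ≫ l = μ ≫ l := by
  let _ : HopfObj H :=
    { one := η, mul := μ, one_mul := one_mul', mul_one := mul_one', mul_assoc := mul_assoc',
      counit := ε, comul := Δ, counit_comul := counit_comul', comul_counit := comul_counit',
      comul_assoc := comul_assoc'.symm, mul_comul := mul_comul', one_comul := one_comul',
      mul_counit := mul_counit', one_counit := one_counit', antipode := S,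
      antipode_left := antipode_l, antipode_right := antipode_r }
  exact HopfObj.braiding_mul_comp_cointegral cocomm integral_l integral_r cointegral_l
    cointegral_r normalization
end

section
/- The move (ac6) — replacing an internal generator b ∈ B by its inverse b⁻¹ in all relators — yields an AC-equivalent relative presentation. -/
namespace AC

/-- A word in the generators `A ⊔ ℕ` (external generators of type `A`, internal
generators indexed by `ℕ`): a list of letters together with exponents `±1`
(`true` = `+1`, `false` = `-1`). -/
abbrev Word (A : Type) := List ((A ⊕ ℕ) × Bool)

/-- The inverse of a word. -/
def invWord {A : Type} (w : Word A) : Word A :=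
  (w.map fun p => (p.1, !p.2)).reverse

/-- The word `w` does not involve the internal generator `b`. -/
def noGen {A : Type} (b : ℕ) (w : Word A) : Prop :=
  ∀ p ∈ w, p.1 ≠ Sum.inr b

/-- Relabelling of the generators of a word. -/
def mapWord {A A' : Type} (f : (A ⊕ ℕ) → (A' ⊕ ℕ)) (w : Word A) : Word A' :=
  w.map fun p => (f p.1, p.2)

/-- A relative presentation with external generators `A`: a finite set `B ⊆ ℕ`
of internal generators together with a finite multiset of relators, which are
words in `A ⊔ B`. -/
structure Pres (A : Type) where
  B : Finset ℕ
  R : Multiset (Word A)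

/-- The elementary AC-moves on relative presentations (together with
relabelling of the internal generators, under which presentations are
identified). -/
inductive ACStep {A : Type} : Pres A → Pres A → Prop
  /-- (ac1) add a fresh internal generator `b` and the relator `b·w`, where `w`
  is a word not involving `b`. -/
  | ac1 (B : Finset ℕ) (R : Multiset (Word A)) (b : ℕ) (w : Word A)
      (hb : b ∉ B) (hw : noGen b w) (hwB : ∀ p ∈ w, ∀ k, p.1 = Sum.inr k → k ∈ B)
      (hR : ∀ r ∈ R, noGen b r) :
      ACStep ⟨B, R⟩ ⟨insert b B, ((Sum.inr b, true) :: w) ::ₘ R⟩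
  /-- (ac2) replace a relator `r` by `g g⁻¹ r` (or `g⁻¹ g r`). -/
  | ac2 (B : Finset ℕ) (R : Multiset (Word A)) (r : Word A) (g : A ⊕ ℕ) (e : Bool) :
      ACStep ⟨B, r ::ₘ R⟩ ⟨B, ((g, e) :: (g, !e) :: r) ::ₘ R⟩
  /-- (ac3) replace a relator by its left product with another relator. -/
  | ac3 (B : Finset ℕ) (R : Multiset (Word A)) (r s : Word A) :
      ACStep ⟨B, r ::ₘ s ::ₘ R⟩ ⟨B, (s ++ r) ::ₘ s ::ₘ R⟩
  /-- (ac4) cyclically permute a relator. -/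
  | ac4 (B : Finset ℕ) (R : Multiset (Word A)) (r₁ r₂ : Word A) :
      ACStep ⟨B, (r₁ ++ r₂) ::ₘ R⟩ ⟨B, (r₂ ++ r₁) ::ₘ R⟩
  /-- (ac5) replace a relator by its inverse. -/
  | ac5 (B : Finset ℕ) (R : Multiset (Word A)) (r : Word A) :
      ACStep ⟨B, r ::ₘ R⟩ ⟨B, invWord r ::ₘ R⟩
  /-- presentations are identified up to injective relabelling of the internal
  generators. -/
  | rename (B : Finset ℕ) (R : Multiset (Word A)) (φ : ℕ → ℕ)
      (hφ : Function.Injective φ) :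
      ACStep ⟨B, R⟩ ⟨B.image φ, R.map (mapWord (Sum.map id φ))⟩

/-- AC-equivalence of relative presentations: the equivalence relation
generated by the AC-moves. -/
def ACEquiv {A : Type} : Pres A → Pres A → Prop :=
  Relation.EqvGen ACStep

end AC

/-- Replace every occurrence of the internal generator `b` in a word by its
inverse `b⁻¹`. -/
def AC.flipGen {A : Type} (b : ℕ) (w : AC.Word A) : AC.Word A :=
  w.map fun p =>
    match p with
    | (Sum.inr k, e) => if k = b then (Sum.inr k, !e) else (Sum.inr k, e)
    | p => p

namespace AC

variable {A : Type}

/-- Replace each occurrence of `b^e` by `c^{-e}`. -/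
def substWord (c b : ℕ) (w : Word A) : Word A :=
  w.map fun p =>
    match p with
    | (Sum.inr k, e) => if k = b then (Sum.inr c, !e) else (Sum.inr k, e)
    | p => p

lemma invWord_invWord (w : Word A) : invWord (invWord w) = w := by
  simp [invWord, List.map_map, Function.comp_def, Bool.not_not]

lemma aceq_of_step {P Q : Pres A} (h : ACStep P Q) : ACEquiv P Q :=
  Relation.EqvGen.rel _ _ h

lemma aceq_refl (P : Pres A) : ACEquiv P P := Relation.EqvGen.refl _

lemma aceq_symm {P Q : Pres A} (h : ACEquiv P Q) : ACEquiv Q P :=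
  Relation.EqvGen.symm _ _ h

lemma aceq_trans {P Q S : Pres A} (h : ACEquiv P Q) (h' : ACEquiv Q S) :
    ACEquiv P S := Relation.EqvGen.trans _ _ _ h h'

/-- Insert a copy of the relator `s` anywhere inside another relator. -/
lemma insert_rel (B : Finset ℕ) (R : Multiset (Word A)) (r₁ r₂ s : Word A) :
    ACEquiv (⟨B, (r₁ ++ r₂) ::ₘ s ::ₘ R⟩ : Pres A)
      ⟨B, (r₁ ++ s ++ r₂) ::ₘ s ::ₘ R⟩ := by
  refine aceq_trans (aceq_of_step (ACStep.ac4 B (s ::ₘ R) r₁ r₂)) ?_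
  refine aceq_trans (aceq_of_step (ACStep.ac3 B R (r₂ ++ r₁) s)) ?_
  have h := aceq_of_step (ACStep.ac4 B (s ::ₘ R) (s ++ r₂) r₁)
  rw [List.append_assoc] at h
  refine aceq_trans h ?_
  rw [← List.append_assoc]
  exact aceq_refl _

/-- Insert a copy of `s⁻¹` anywhere inside another relator. -/
lemma insert_rel_inv (B : Finset ℕ) (R : Multiset (Word A)) (r₁ r₂ s : Word A) :
    ACEquiv (⟨B, (r₁ ++ r₂) ::ₘ s ::ₘ R⟩ : Pres A)
      ⟨B, (r₁ ++ invWord s ++ r₂) ::ₘ s ::ₘ R⟩ := by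
  have s1 : ACEquiv (⟨B, (r₁ ++ r₂) ::ₘ s ::ₘ R⟩ : Pres A)
      ⟨B, (r₁ ++ r₂) ::ₘ invWord s ::ₘ R⟩ := by
    rw [Multiset.cons_swap, Multiset.cons_swap (r₁ ++ r₂) (invWord s)]
    exact aceq_of_step (ACStep.ac5 B _ s)
  have s2 := insert_rel B R r₁ r₂ (invWord s)
  have s3 : ACEquiv (⟨B, (r₁ ++ invWord s ++ r₂) ::ₘ invWord s ::ₘ R⟩ : Pres A)
      ⟨B, (r₁ ++ invWord s ++ r₂) ::ₘ s ::ₘ R⟩ := by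
    rw [Multiset.cons_swap, Multiset.cons_swap (r₁ ++ invWord s ++ r₂) s]
    have h := aceq_of_step (ACStep.ac5 B ((r₁ ++ invWord s ++ r₂) ::ₘ R) (invWord s))
    rwa [invWord_invWord] at h
  exact aceq_trans s1 (aceq_trans s2 s3)

/-- Cancel an adjacent inverse pair anywhere inside a relator. -/
lemma cancel_pair (B : Finset ℕ) (R : Multiset (Word A)) (r₁ r₂ : Word A)
    (g : A ⊕ ℕ) (e : Bool) :
    ACEquiv (⟨B, (r₁ ++ (g, e) :: (g, !e) :: r₂) ::ₘ R⟩ : Pres A)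
      ⟨B, (r₁ ++ r₂) ::ₘ R⟩ := by
  refine aceq_trans
    (aceq_of_step (ACStep.ac4 B R r₁ ((g, e) :: (g, !e) :: r₂))) ?_
  have h := aceq_of_step (ACStep.ac2 B R (r₂ ++ r₁) g e)
  refine aceq_trans (aceq_symm ?_) (aceq_of_step (ACStep.ac4 B R r₂ r₁))
  simpa using h

section Subst

variable (c b : ℕ)

/-- The relator `c·b`, i.e. `c = b⁻¹`. -/
def cbRel : Word A := [(Sum.inr c, true), (Sum.inr b, true)]

lemma flip_letter (B : Finset ℕ) (R : Multiset (Word A)) (r₁ r₂ : Word A)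
    (e : Bool) :
    ACEquiv (⟨B, (r₁ ++ (Sum.inr b, e) :: r₂) ::ₘ (cbRel c b : Word A) ::ₘ R⟩ : Pres A)
      ⟨B, (r₁ ++ (Sum.inr c, !e) :: r₂) ::ₘ (cbRel c b : Word A) ::ₘ R⟩ := by
  cases e with
  | true =>
    have h := insert_rel_inv B R (r₁ ++ [(Sum.inr b, true)]) r₂ (cbRel c b)
    have h2 := cancel_pair B ((cbRel c b : Word A) ::ₘ R) r₁
      ((Sum.inr c, false) :: r₂) (Sum.inr b) true
    simp only [cbRel, invWord, List.map_cons, List.map_nil, List.reverse_cons,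
      List.reverse_nil, List.nil_append, List.append_assoc, List.cons_append,
      List.nil_append, Bool.not_true] at h h2 ⊢
    exact aceq_trans h h2
  | false =>
    have h := insert_rel B R r₁ ((Sum.inr b, false) :: r₂) (cbRel c b)
    have h2 := cancel_pair B ((cbRel c b : Word A) ::ₘ R)
      (r₁ ++ [(Sum.inr c, true)]) r₂ (Sum.inr b) true
    simp only [cbRel, List.append_assoc, List.cons_append, List.nil_append,
      List.singleton_append, Bool.not_true, Bool.not_false] at h h2 ⊢
    exact aceq_trans h h2

lemma subst_aux (B : Finset ℕ) (R : Multiset (Word A)) :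
    ∀ (r r₁ : Word A),
      ACEquiv (⟨B, (r₁ ++ r) ::ₘ (cbRel c b : Word A) ::ₘ R⟩ : Pres A)
        ⟨B, (r₁ ++ substWord c b r) ::ₘ (cbRel c b : Word A) ::ₘ R⟩ := by
  intro r
  induction r with
  | nil => intro r₁; exact aceq_refl _
  | cons p r ih =>
    intro r₁
    obtain ⟨g, e⟩ := p
    cases g with
    | inl a =>
      have h := ih (r₁ ++ [(Sum.inl a, e)])
      simp only [substWord, List.map_cons, List.append_assoc,
        List.singleton_append] at h ⊢
      exact h
    | inr k =>
      by_cases hk : k = b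
      · subst hk
        have h1 := flip_letter c k B R r₁ r e
        have h2 := ih (r₁ ++ [(Sum.inr c, !e)])
        simp only [substWord, List.map_cons, List.append_assoc,
          List.singleton_append, if_pos rfl] at h1 h2 ⊢
        exact aceq_trans h1 h2
      · have h := ih (r₁ ++ [(Sum.inr k, e)])
        simp only [substWord, List.map_cons, List.append_assoc,
          List.singleton_append, if_neg hk] at h ⊢
        exact h

lemma subst_one (B : Finset ℕ) (R : Multiset (Word A)) (r : Word A) :
    ACEquiv (⟨B, r ::ₘ (cbRel c b : Word A) ::ₘ R⟩ : Pres A)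
      ⟨B, substWord c b r ::ₘ (cbRel c b : Word A) ::ₘ R⟩ := by
  have h := subst_aux c b B R r []
  simpa using h

lemma subst_all (B : Finset ℕ) :
    ∀ (R E : Multiset (Word A)),
      ACEquiv (⟨B, (cbRel c b : Word A) ::ₘ (R + E)⟩ : Pres A)
        ⟨B, (cbRel c b : Word A) ::ₘ (R.map (substWord c b) + E)⟩ := by
  intro R
  induction R using Multiset.induction with
  | empty => intro E; exact aceq_refl _
  | cons a R ih =>
    intro E
    have e1 : (cbRel c b : Word A) ::ₘ ((a ::ₘ R) + E)
        = a ::ₘ (cbRel c b : Word A) ::ₘ (R + E) := by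
      rw [Multiset.cons_add, Multiset.cons_swap]
    have e2 : substWord c b a ::ₘ (cbRel c b : Word A) ::ₘ (R + E)
        = (cbRel c b : Word A) ::ₘ (R + (substWord c b a ::ₘ E)) := by
      rw [Multiset.cons_swap, Multiset.add_cons]
    have e3 : (cbRel c b : Word A) ::ₘ (R.map (substWord c b) + (substWord c b a ::ₘ E))
        = (cbRel c b : Word A) ::ₘ ((a ::ₘ R).map (substWord c b) + E) := by
      rw [Multiset.map_cons, Multiset.add_cons, Multiset.cons_add]
    rw [e1]
    refine aceq_trans (subst_one c b B (R + E) a) ?_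
    rw [e2]
    refine aceq_trans (ih _) ?_
    rw [e3]
    exact aceq_refl _

end Subst

/-- A strict upper bound for the internal generators occurring in a word. -/
def wBound (w : Word A) : ℕ :=
  w.foldr (fun p m => max (Sum.elim (fun _ => 0) (· + 1) p.1) m) 0

lemma le_wBound {w : Word A} {k : ℕ} {e : Bool} (h : (Sum.inr k, e) ∈ w) :
    k + 1 ≤ wBound w := by
  induction w with
  | nil => simp at h
  | cons p w ih =>
    rcases List.mem_cons.1 h with h | h
    · subst h
      exact le_max_left _ _
    · exact le_trans (ih h) (le_max_right _ _)

lemma noGen_of_bound {w : Word A} {c : ℕ} (h : wBound w ≤ c) : noGen c w := by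
  intro p hp hpc
  have : (Sum.inr c, p.2) ∈ w := by rwa [← hpc, Prod.mk.eta]
  have := le_wBound this
  omega

lemma noGen_substWord (c b : ℕ) (hbc : b ≠ c) (r : Word A) :
    noGen b (substWord c b r) := by
  intro p hp
  simp only [substWord, List.mem_map] at hp
  obtain ⟨⟨g, e⟩, _, hq⟩ := hp
  cases g with
  | inl a => subst hq; simp
  | inr k =>
    by_cases hk : k = b
    · simp only [hk, if_pos rfl] at hq
      subst hq
      simp [Ne.symm hbc]
    · simp only [if_neg hk] at hq
      subst hq
      simp [hk]

lemma mapWord_substWord (c b : ℕ) (hbc : b ≠ c) (r : Word A) (hc : noGen c r) :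
    mapWord (Sum.map id (Equiv.swap b c)) (substWord c b r) = flipGen b r := by
  simp only [mapWord, substWord, flipGen, List.map_map]
  apply List.map_congr_left
  intro p hp
  obtain ⟨g, e⟩ := p
  cases g with
  | inl a => simp [Function.comp]
  | inr k =>
    by_cases hk : k = b
    · subst hk
      simp [Function.comp, Equiv.swap_apply_right]
    · have hkc : k ≠ c := by
        intro h
        exact hc (Sum.inr k, e) hp (by rw [h])
      simp [Function.comp, hk, Equiv.swap_apply_of_ne_of_ne hk hkc]

lemma image_swap_of_fresh (B : Finset ℕ) (b c : ℕ) (hb : b ∈ B) (hc : c ∉ B) :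
    (insert c (B.erase b)).image (Equiv.swap b c) = B := by
  rw [Finset.image_insert, Equiv.swap_apply_right]
  have h1 : (B.erase b).image (Equiv.swap b c) = B.erase b := by
    rw [Finset.image_congr (g := id), Finset.image_id]
    intro x hx
    simp only [Finset.coe_erase, Set.mem_diff, Finset.mem_coe,
      Set.mem_singleton_iff] at hx
    have hxb : x ≠ b := hx.2
    have hxc : x ≠ c := fun h => hc (h ▸ hx.1)
    simp [Equiv.swap_apply_of_ne_of_ne hxb hxc]
  rw [h1, Finset.insert_erase hb]

end AC

open AC in
/-- (ac6) replacing an internal generator `b ∈ B` by its inverse `b⁻¹` in all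
relators yields an AC-equivalent relative presentation. -/
theorem ac6_derivable {A : Type} (B : Finset ℕ) (R : Multiset (Word A))
    (b : ℕ) (hb : b ∈ B) :
    ACEquiv (⟨B, R⟩ : Pres A) ⟨B, R.map (flipGen b)⟩ := by
  classical
  set c : ℕ := B.sup (· + 1) + (R.map wBound).sum with hcdef
  have hcB : c ∉ B := by
    intro h
    have h1 : c + 1 ≤ B.sup (· + 1) := Finset.le_sup (f := (· + 1)) h
    omega
  have hbc : b ≠ c := fun h => hcB (h ▸ hb)
  have hRc : ∀ r ∈ R, noGen c r := by
    intro r hr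
    apply noGen_of_bound
    have h1 : wBound r ≤ (R.map wBound).sum :=
      Multiset.single_le_sum (fun x _ => Nat.zero_le x) _
        (Multiset.mem_map_of_mem _ hr)
    omega
  -- Step 1: introduce the fresh generator `c` with relator `c·b`.
  have step1 : ACEquiv (⟨B, R⟩ : Pres A)
      ⟨insert c B, (cbRel c b : Word A) ::ₘ R⟩ := by
    have hw : noGen c ([(Sum.inr b, true)] : Word A) := by
      intro p hp
      simp only [List.mem_singleton] at hp
      subst hp
      simp [hbc]
    have hwB : ∀ p ∈ ([(Sum.inr b, true)] : Word A), ∀ k, p.1 = Sum.inr k → k ∈ B := by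
      intro p hp k hk
      simp only [List.mem_singleton] at hp
      subst hp
      simp only [Sum.inr.injEq] at hk
      exact hk ▸ hb
    exact aceq_of_step (ACStep.ac1 B R c [(Sum.inr b, true)] hcB hw hwB hRc)
  -- Step 2: substitute `c⁻¹` for `b` in all relators.
  have step2 : ACEquiv (⟨insert c B, (cbRel c b : Word A) ::ₘ R⟩ : Pres A)
      ⟨insert c B, (cbRel c b : Word A) ::ₘ R.map (substWord c b)⟩ := by
    have h := subst_all c b (insert c B) R 0
    simpa using h
  -- Step 3: rotate the relator `c·b` to `b·c`.
  have step3 : ACEquiv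
      (⟨insert c B, (cbRel c b : Word A) ::ₘ R.map (substWord c b)⟩ : Pres A)
      ⟨insert c B,
        ((Sum.inr b, true) :: [(Sum.inr c, true)] : Word A) ::ₘ R.map (substWord c b)⟩ := by
    have h := aceq_of_step (ACStep.ac4 (insert c B) (R.map (substWord c b))
      [(Sum.inr c, true)] [(Sum.inr b, true)])
    simpa [cbRel] using h
  -- Step 4: remove the generator `b` together with the relator `b·c`.
  have hB1 : insert b (insert c (B.erase b)) = insert c B := by
    rw [Finset.insert_comm, Finset.insert_erase hb]
  have step4 : ACEquiv
      (⟨insert c B,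
        ((Sum.inr b, true) :: [(Sum.inr c, true)] : Word A) ::ₘ R.map (substWord c b)⟩ : Pres A)
      ⟨insert c (B.erase b), R.map (substWord c b)⟩ := by
    have hbB1 : b ∉ insert c (B.erase b) := by
      simp [hbc]
    have hw : noGen b ([(Sum.inr c, true)] : Word A) := by
      intro p hp
      simp only [List.mem_singleton] at hp
      subst hp
      simp [Ne.symm hbc]
    have hwB : ∀ p ∈ ([(Sum.inr c, true)] : Word A), ∀ k, p.1 = Sum.inr k →
        k ∈ insert c (B.erase b) := by
      intro p hp k hk
      simp only [List.mem_singleton] at hp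
      subst hp
      simp only [Sum.inr.injEq] at hk
      simp [← hk]
    have hR' : ∀ r ∈ R.map (substWord c b), noGen b r := by
      intro r hr
      obtain ⟨r₀, _, rfl⟩ := Multiset.mem_map.1 hr
      exact noGen_substWord c b hbc r₀
    have h := aceq_of_step (ACStep.ac1 (insert c (B.erase b))
      (R.map (substWord c b)) b [(Sum.inr c, true)] hbB1 hw hwB hR')
    rw [hB1] at h
    exact aceq_symm h
  -- Step 5: rename `c` back to `b`.
  have step5 : ACEquiv
      (⟨insert c (B.erase b), R.map (substWord c b)⟩ : Pres A)
      ⟨B, R.map (flipGen b)⟩ := by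
    have h := aceq_of_step (ACStep.rename (insert c (B.erase b))
      (R.map (substWord c b)) (Equiv.swap b c) (Equiv.swap b c).injective)
    have e1 : (insert c (B.erase b)).image (Equiv.swap b c) = B :=
      image_swap_of_fresh B b c hb hcB
    have e2 : (R.map (substWord c b)).map (mapWord (Sum.map id (Equiv.swap b c)))
        = R.map (flipGen b) := by
      rw [Multiset.map_map]
      apply Multiset.map_congr rfl
      intro r hr
      exact mapWord_substWord c b hbc r (hRc r hr)
    rw [e1, e2] at h
    exact h
  exact aceq_trans step1 (aceq_trans step2 (aceq_trans step3
    (aceq_trans step4 step5)))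
end

section
/- In the category P of relative group presentations with the monoidal product given by disjoint union, the morphism γ̂_{1,1} = ⟨(a₁,a₂),(b₁,b₂); ∅ | a₁b₂⁻¹, a₂b₁⁻¹⟩ : 2 → 2 is a symmetry: γ̂_{1,1} ∘ γ̂_{1,1} is AC-equivalent to the identity morphism id₂ = ⟨(a₁,a₂),(b₁,b₂); ∅ | a₁b₁⁻¹, a₂b₂⁻¹⟩. -/
namespace AC

/-- A morphism `n₁ → n₂` in the category `P` of relative group presentations:
a relative presentation whose external generators are the ordered set
`Fin n₁ ⊕ Fin n₂` (source generators followed by target generators). -/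
abbrev Mor (n₁ n₂ : ℕ) := Pres (Fin n₁ ⊕ Fin n₂)

/-- Relabelling of the generators of the first factor in a composition. -/
def compFstGen (n₁ n₂ n₃ : ℕ) :
    ((Fin n₁ ⊕ Fin n₂) ⊕ ℕ) → ((Fin n₁ ⊕ Fin n₃) ⊕ ℕ)
  | .inl (.inl i) => .inl (.inl i)
  | .inl (.inr j) => .inr (3 * j.val + 2)
  | .inr k => .inr (3 * k)

/-- Relabelling of the generators of the second factor in a composition. -/
def compSndGen (n₁ n₂ n₃ : ℕ) :
    ((Fin n₂ ⊕ Fin n₃) ⊕ ℕ) → ((Fin n₁ ⊕ Fin n₃) ⊕ ℕ)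
  | .inl (.inl j) => .inr (3 * j.val + 2)
  | .inl (.inr i) => .inl (.inr i)
  | .inr k => .inr (3 * k + 1)

/-- Composition in the category `P`: the target generators of `P` are
identified with the source generators of `Q` and become internal, and the
relators are juxtaposed (internal generators are relabelled disjointly). -/
def compMor {n₁ n₂ n₃ : ℕ} (P : Mor n₁ n₂) (Q : Mor n₂ n₃) : Mor n₁ n₃ where
  B := (P.B.image fun k => 3 * k) ∪ (Q.B.image fun k => 3 * k + 1) ∪
      ((Finset.univ : Finset (Fin n₂)).image fun j => 3 * j.val + 2)
  R := P.R.map (mapWord (compFstGen n₁ n₂ n₃)) +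
      Q.R.map (mapWord (compSndGen n₁ n₂ n₃))

/-- The identity morphism
`idₙ = ⟨(a₁,…,aₙ),(b₁,…,bₙ); ∅ | a₁b₁⁻¹,…,aₙbₙ⁻¹⟩ : n → n`. -/
def idMor (n : ℕ) : Mor n n where
  B := ∅
  R := Multiset.map
    (fun i : Fin n => [((Sum.inl (Sum.inl i) : (Fin n ⊕ Fin n) ⊕ ℕ), true),
                       (Sum.inl (Sum.inr i), false)])
    (Finset.univ : Finset (Fin n)).val


/-- The braiding morphism
`γ̂₁,₁ = ⟨(a₁,a₂),(b₁,b₂); ∅ | a₁b₂⁻¹, a₂b₁⁻¹⟩ : 2 → 2`. -/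
def gammaHat : Mor 2 2 where
  B := ∅
  R := {[((Sum.inl (Sum.inl 0) : (Fin 2 ⊕ Fin 2) ⊕ ℕ), true), (Sum.inl (Sum.inr 1), false)],
        [((Sum.inl (Sum.inl 1) : (Fin 2 ⊕ Fin 2) ⊕ ℕ), true), (Sum.inl (Sum.inr 0), false)]}

theorem stepF {A : Type} {P Q : Pres A} (h : ACStep P Q) : ACEquiv P Q :=
  Relation.EqvGen.rel _ _ h

theorem stepB {A : Type} {P Q : Pres A} (h : ACStep Q P) : ACEquiv P Q :=
  Relation.EqvGen.symm _ _ (Relation.EqvGen.rel _ _ h)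

theorem eqStep {A : Type} {P Q : Pres A} (h : P = Q) : ACEquiv P Q :=
  h ▸ Relation.EqvGen.refl P

theorem pres_ext {A : Type} {P Q : Pres A} (h1 : P.B = Q.B) (h2 : P.R = Q.R) : P = Q := by
  cases P; cases Q; cases h1; cases h2; rfl

theorem key {A : Type} [DecidableEq A] (B : Finset ℕ) (R : Multiset (Word A)) (a b x : A ⊕ ℕ) :
    ACEquiv (⟨B, [(a,true),(b,false)] ::ₘ [(x,true),(b,false)] ::ₘ R⟩ : Pres A)
            ⟨B, [(a,true),(x,false)] ::ₘ [(x,true),(b,false)] ::ₘ R⟩ := by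
  refine .trans _ _ _ (eqStep (pres_ext (Q := ⟨B, [(x,true),(b,false)] ::ₘ [(a,true),(b,false)] ::ₘ R⟩) rfl (Multiset.cons_swap _ _ _))) ?_
  refine .trans _ _ _ (stepF (ACStep.ac5 B ([(a,true),(b,false)] ::ₘ R) [(x,true),(b,false)])) ?_
  refine .trans _ _ _ (stepF (ACStep.ac3 B R [(b,true),(x,false)] [(a,true),(b,false)])) ?_
  refine .trans _ _ _ (stepF (ACStep.ac4 B _ [(a,true)] [(b,false),(b,true),(x,false)])) ?_
  refine .trans _ _ _ (stepB (ACStep.ac2 B _ [(x,false),(a,true)] b false)) ?_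
  refine .trans _ _ _ (stepF (ACStep.ac4 B _ [(x,false)] [(a,true)])) ?_
  refine .trans _ _ _ (stepF (ACStep.ac5 B ([(a,true),(b,false)] ::ₘ R) [(a,true),(x,false)])) ?_
  refine .trans _ _ _ (eqStep (pres_ext (Q := ⟨B, [(a,true),(b,false)] ::ₘ [(x,true),(a,false)] ::ₘ R⟩) rfl (Multiset.cons_swap _ _ _))) ?_
  refine .trans _ _ _ (stepF (ACStep.ac3 B R [(a,true),(b,false)] [(x,true),(a,false)])) ?_
  refine .trans _ _ _ (stepF (ACStep.ac4 B _ [(x,true)] [(a,false),(a,true),(b,false)])) ?_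
  refine .trans _ _ _ (stepB (ACStep.ac2 B _ [(b,false),(x,true)] a false)) ?_
  refine .trans _ _ _ (stepF (ACStep.ac4 B _ [(b,false)] [(x,true)])) ?_
  refine .trans _ _ _ (eqStep (pres_ext (Q := ⟨B, [(x,true),(a,false)] ::ₘ [(x,true),(b,false)] ::ₘ R⟩) rfl (Multiset.cons_swap _ _ _))) ?_
  exact stepF (ACStep.ac5 B ([(x,true),(b,false)] ::ₘ R) [(x,true),(a,false)])

end AC

section Main
open AC

private abbrev G := (Fin 2 ⊕ Fin 2) ⊕ ℕ
private def a0 : G := Sum.inl (Sum.inl 0)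
private def a1 : G := Sum.inl (Sum.inl 1)
private def b0 : G := Sum.inl (Sum.inr 0)
private def b1 : G := Sum.inl (Sum.inr 1)
private def x2 : G := Sum.inr 2
private def x5 : G := Sum.inr 5

private def u0 : Word (Fin 2 ⊕ Fin 2) := [(a0,true),(b0,false)]
private def u1 : Word (Fin 2 ⊕ Fin 2) := [(a1,true),(b1,false)]
private def s2 : Word (Fin 2 ⊕ Fin 2) := [(x2,true),(b1,false)]
private def s5 : Word (Fin 2 ⊕ Fin 2) := [(x5,true),(b0,false)]
private def w0 : Word (Fin 2 ⊕ Fin 2) := [(a0,true),(x5,false)]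
private def w1 : Word (Fin 2 ⊕ Fin 2) := [(a1,true),(x2,false)]

private theorem main_chain : ACEquiv (idMor 2) (compMor gammaHat gammaHat) := by
  refine .trans _ _ _ (eqStep (pres_ext (P := idMor 2)
    (Q := ⟨∅, u0 ::ₘ u1 ::ₘ 0⟩) (by decide) (by decide))) ?_
  refine .trans _ _ _ (stepF (ACStep.ac1 ∅ (u0 ::ₘ u1 ::ₘ 0) 2
    [(Sum.inl (Sum.inr 1), false)] (by decide) (by simp [noGen, u0, u1, s2, s5, a0, a1, b0, b1, x2, x5])
    (by rintro p hp k hk; simp_all [u0, u1, a0, a1, b0, b1]) (by simp [noGen, u0, u1, s2, s5, a0, a1, b0, b1, x2, x5]))) ?_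
  refine .trans _ _ _ (stepF (ACStep.ac1 (insert 2 ∅) (s2 ::ₘ u0 ::ₘ u1 ::ₘ 0) 5
    [(Sum.inl (Sum.inr 0), false)] (by decide) (by simp [noGen, u0, u1, s2, s5, a0, a1, b0, b1, x2, x5])
    (by rintro p hp k hk; simp_all) (by simp [noGen, u0, u1, s2, s5, a0, a1, b0, b1, x2, x5]))) ?_
  refine .trans _ _ _ (eqStep (pres_ext
    (Q := ⟨insert 5 (insert 2 ∅), u0 ::ₘ s5 ::ₘ s2 ::ₘ u1 ::ₘ 0⟩) rfl (by decide))) ?_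
  refine .trans _ _ _ (key (insert 5 (insert 2 ∅)) (s2 ::ₘ u1 ::ₘ 0) a0 b0 x5) ?_
  refine .trans _ _ _ (eqStep (pres_ext
    (Q := ⟨insert 5 (insert 2 ∅), u1 ::ₘ s2 ::ₘ w0 ::ₘ s5 ::ₘ 0⟩) rfl (by decide))) ?_
  refine .trans _ _ _ (key (insert 5 (insert 2 ∅)) (w0 ::ₘ s5 ::ₘ 0) a1 b1 x2) ?_
  exact eqStep (pres_ext (by decide) (by decide))

end Main

open AC in
/-- In the category of relative group presentations, the braiding `γ̂₁,₁` is a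
symmetry: `γ̂₁,₁ ∘ γ̂₁,₁` is AC-equivalent to the identity morphism `id₂`. -/
theorem gammaHat_symmetry : ACEquiv (compMor gammaHat gammaHat) (idMor 2) := by
  exact Relation.EqvGen.symm _ _ main_chain
end
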